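/- Let G be a connected graph and L a list assignment for G. If |L(v)| ≥ d(v) for all v ∈ V(G) and there exists some vertex w with |L(w)| > d(w), then G is L-swappable. -/

import Mathlib

noncomputable section
open scoped Classical

/-- `φ` is a proper `L`-coloring of `G`: every vertex gets a color from its list,
and adjacent vertices get distinct colors. -/
def IsLColoring {V : Type*} (G : SimpleGraph V) (L : V → Finset ℕ) (φ : V → ℕ) : Prop :=
  (∀ v, φ v ∈ L v) ∧ ∀ ⦃u w⦄, G.Adj u w → φ u ≠ φ w

/-- `KempeChain G φ a b x y` : `y` lies in the `a,b`-component of `x`, i.e. `y` is reachable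
from `x` in the subgraph induced by the vertices colored `a` or `b` by `φ`. -/
def KempeChain {V : Type*} (G : SimpleGraph V) (φ : V → ℕ) (a b : ℕ) : V → V → Prop :=
  Relation.ReflTransGen fun u w => G.Adj u w ∧ (φ u = a ∨ φ u = b) ∧ (φ w = a ∨ φ w = b)

/-- The coloring obtained from `φ` by performing an `(a,b)`-Kempe swap on the
`a,b`-component containing `x`. -/
def kempeSwap {V : Type*} (G : SimpleGraph V) (φ : V → ℕ) (a b : ℕ) (x : V) : V → ℕ := fun w =>
  if KempeChain G φ a b x w then (if φ w = a then b else if φ w = b then a else φ w) else φ w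

/-- `ψ` is obtained from `φ` by a single `L`-valid Kempe swap. -/
def KempeStep {V : Type*} (G : SimpleGraph V) (L : V → Finset ℕ) (φ ψ : V → ℕ) : Prop :=
  ∃ a b x, a ≠ b ∧ (φ x = a ∨ φ x = b) ∧ ψ = kempeSwap G φ a b x ∧ IsLColoring G L ψ

/-- Two colorings are `L`-equivalent if one can be transformed into the other by a
sequence of `L`-valid Kempe swaps. -/
def LEquiv {V : Type*} (G : SimpleGraph V) (L : V → Finset ℕ) (φ ψ : V → ℕ) : Prop :=
  Relation.ReflTransGen (KempeStep G L) φ ψ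

/-- `G` is `L`-swappable: every two of its `L`-colorings are `L`-equivalent. -/
def LSwappable {V : Type*} (G : SimpleGraph V) (L : V → Finset ℕ) : Prop :=
  ∀ φ ψ, IsLColoring G L φ → IsLColoring G L ψ → LEquiv G L φ ψ

/-!
Induction on the edges. Pick a vertex `w` with a spare color and a neighbour, and delete the edges
at `w`. In the smaller graph every component still contains a vertex with a spare color (`w`
itself, or a former neighbour of `w`), so it is `L`-swappable. An `(a,b)`-swap there lifts to `G`,
up to the color of `w`: if the `G`-chain avoids `w` it is the same chain; otherwise recolor `w` with
a color of `L(w)` outside `{a, b}` not used on its neighbours, and if there is none, counting with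
`|L(w)| > d(w)` shows that `w` has a single neighbour colored `a` or `b`, so the `G`-chain is the old
chain plus `w`, and the swap moves `w` to a color of `L(w)`. Two `L`-colorings that differ only
at `w` differ by one recoloring of `w`.
-/

section

open SimpleGraph

variable {V : Type*} {G H : SimpleGraph V} {L : V → Finset ℕ} {φ ψ : V → ℕ} {a b c : ℕ}
  {v w x y : V}

theorem kempeSwap_apply (G : SimpleGraph V) (φ : V → ℕ) (a b : ℕ) (x y : V) :
    kempeSwap G φ a b x y = if KempeChain G φ a b x y then Equiv.swap a b (φ y) else φ y := by
  rw [Equiv.swap_apply_def]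
  rfl

namespace KempeChain

theorem colors (hx : φ x = a ∨ φ x = b) (h : KempeChain G φ a b x y) : φ y = a ∨ φ y = b := by
  induction h with
  | refl => exact hx
  | tail _ hstep _ => exact hstep.2.2

theorem mono (hHG : H ≤ G) (h : KempeChain H φ a b x y) : KempeChain G φ a b x y :=
  Relation.ReflTransGen.mono (fun _ _ huv => ⟨hHG huv.1, huv.2⟩) _ _ h

theorem eq_of_forall_adj (hx : ∀ z, G.Adj x z → ¬(φ z = a ∨ φ z = b))
    (h : KempeChain G φ a b x y) : y = x := by
  rcases Relation.ReflTransGen.cases_head h with rfl | ⟨z, hxz, _⟩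
  · rfl
  · exact (hx z hxz.1 hxz.2.2).elim

end KempeChain

theorem kempeSwap_ne_of_adj (hφ : ∀ ⦃u v⦄, G.Adj u v → φ u ≠ φ v) {u v : V} (huv : G.Adj u v) :
    kempeSwap G φ a b x u ≠ kempeSwap G φ a b x v := by
  have mixed : ∀ {u v}, G.Adj u v → KempeChain G φ a b x u → ¬KempeChain G φ a b x v →
      Equiv.swap a b (φ u) ≠ φ v := by
    intro u v huv hu hv
    by_cases hab : φ u = a ∨ φ u = b
    · have hv' : ¬(φ v = a ∨ φ v = b) := fun h => hv (hu.tail ⟨huv, hab, h⟩)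
      rcases hab with h | h <;> rw [h]
      · rw [Equiv.swap_apply_left]; exact fun h' => hv' (.inr h'.symm)
      · rw [Equiv.swap_apply_right]; exact fun h' => hv' (.inl h'.symm)
    · rw [not_or] at hab
      rw [Equiv.swap_apply_of_ne_of_ne hab.1 hab.2]
      exact hφ huv
  simp only [kempeSwap_apply]
  split_ifs with hu hv hv
  · exact (Equiv.injective _).ne (hφ huv)
  · exact mixed huv hu hv
  · exact (mixed huv.symm hv hu).symm
  · exact hφ huv

theorem IsLColoring.mono (hHG : H ≤ G) (hφ : IsLColoring G L φ) : IsLColoring H L φ :=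
  ⟨hφ.1, fun _ _ h => hφ.2 (hHG h)⟩

theorem KempeStep.isLColoring (h : KempeStep G L φ ψ) : IsLColoring G L ψ := by
  obtain ⟨_, _, _, _, _, _, hψ⟩ := h
  exact hψ

theorem LEquiv.isLColoring (h : LEquiv G L φ ψ) (hφ : IsLColoring G L φ) : IsLColoring G L ψ := by
  induction h with
  | refl => exact hφ
  | tail _ hstep _ => exact hstep.isLColoring

theorem kempeStep_update (hφ : IsLColoring G L φ) (hc : c ∈ L v) (hcv : c ≠ φ v)
    (hnb : ∀ z, G.Adj v z → φ z ≠ c) : KempeStep G L φ (Function.update φ v c) := by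
  have hswap : kempeSwap G φ (φ v) c v = Function.update φ v c := by
    funext y
    rw [kempeSwap_apply]
    by_cases hy : KempeChain G φ (φ v) c v y
    · obtain rfl := hy.eq_of_forall_adj fun z hz h => h.elim (hφ.2 hz ·.symm) (hnb z hz)
      rw [if_pos hy, Function.update_self, Equiv.swap_apply_left]
    · rw [if_neg hy, Function.update_of_ne]
      rintro rfl
      exact hy .refl
  refine ⟨φ v, c, v, hcv.symm, .inl rfl, hswap.symm, fun y => ?_, ?_⟩
  · rcases eq_or_ne y v with rfl | hy
    · simpa using hc
    · simpa [hy] using hφ.1 y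
  · rw [← hswap]
    exact fun _ _ h => kempeSwap_ne_of_adj hφ.2 h

theorem lEquiv_of_forall_ne_eq (hφ : IsLColoring G L φ) (hψ : IsLColoring G L ψ)
    (h : ∀ y, y ≠ v → φ y = ψ y) : LEquiv G L φ ψ := by
  by_cases hv : φ v = ψ v
  · obtain rfl : φ = ψ := funext fun y => (eq_or_ne y v).elim (· ▸ hv) (h y)
    exact .refl
  · have hupdate : Function.update φ v (ψ v) = ψ := by
      funext y
      rcases eq_or_ne y v with rfl | hy
      · simp
      · simp [hy, h y hy]
    refine hupdate ▸ .single (kempeStep_update hφ (hψ.1 v) (Ne.symm hv) fun z hz => ?_)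
    rw [h z hz.ne']
    exact hψ.2 hz.symm

theorem lSwappable_of_forall_not_adj [Finite V] (hG : ∀ u v, ¬G.Adj u v) : LSwappable G L := by
  have := Fintype.ofFinite V
  intro φ ψ hφ hψ
  let mix (s : Finset V) : V → ℕ := fun v => if v ∈ s then ψ v else φ v
  have hmix (s : Finset V) : IsLColoring G L (mix s) :=
    ⟨fun v => by by_cases hv : v ∈ s <;> simp [mix, hv, hφ.1 v, hψ.1 v],
      fun u v h => (hG u v h).elim⟩
  have key (s : Finset V) : LEquiv G L φ (mix s) := by
    induction s using Finset.induction_on with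
    | empty =>
      simp only [mix, Finset.notMem_empty, if_false]
      exact .refl
    | insert v s _ ih =>
      exact ih.trans (lEquiv_of_forall_ne_eq (hmix s) (hmix _) (v := v) fun y hy => by simp [mix, hy])
  simpa [mix] using key Finset.univ

theorem kempeChain_deleteIncidenceSet_congr (h : ∀ y, y ≠ w → φ y = ψ y) :
    KempeChain (G.deleteIncidenceSet w) φ a b = KempeChain (G.deleteIncidenceSet w) ψ a b := by
  have key : ∀ φ ψ : V → ℕ, (∀ y, y ≠ w → φ y = ψ y) → ∀ x y,
      KempeChain (G.deleteIncidenceSet w) φ a b x y →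
        KempeChain (G.deleteIncidenceSet w) ψ a b x y := by
    intro φ ψ h x y hxy
    refine Relation.ReflTransGen.mono (fun u v ⟨huv, hu, hv⟩ => ?_) _ _ hxy
    obtain ⟨_, huw, hvw⟩ := deleteIncidenceSet_adj.1 huv
    exact ⟨huv, h u huw ▸ hu, h v hvw ▸ hv⟩
  funext x y
  exact propext ⟨key φ ψ h x y, key ψ φ (fun y hy => (h y hy).symm) x y⟩

theorem kempeSwap_deleteIncidenceSet_congr (h : ∀ y, y ≠ w → φ y = ψ y) (hy : y ≠ w) :
    kempeSwap (G.deleteIncidenceSet w) φ a b x y = kempeSwap (G.deleteIncidenceSet w) ψ a b x y := by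
  rw [kempeSwap_apply, kempeSwap_apply, kempeChain_deleteIncidenceSet_congr h, h y hy]

namespace KempeChain

theorem ne_of_deleteIncidenceSet (hxw : x ≠ w)
    (h : KempeChain (G.deleteIncidenceSet w) φ a b x y) : y ≠ w := by
  induction h with
  | refl => exact hxw
  | tail _ hstep _ => exact (deleteIncidenceSet_adj.1 hstep.1).2.2

theorem eq_of_deleteIncidenceSet (h : KempeChain (G.deleteIncidenceSet w) φ a b w y) : y = w :=
  h.eq_of_forall_adj fun _ hz => ((deleteIncidenceSet_adj.1 hz).2.1 rfl).elim

theorem deleteIncidenceSet_or_exists (hxw : x ≠ w) (h : KempeChain G φ a b x y) :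
    KempeChain (G.deleteIncidenceSet w) φ a b x y ∨
      ∃ z, G.Adj w z ∧ KempeChain (G.deleteIncidenceSet w) φ a b x z ∧ (φ z = a ∨ φ z = b) := by
  induction h with
  | refl => exact .inl .refl
  | @tail u v _ huv ih =>
    obtain ⟨hadj, hu, hv⟩ := huv
    rcases ih with ih | hex
    · by_cases hvw : v = w
      · subst hvw
        exact .inr ⟨u, hadj.symm, ih, hu⟩
      · exact .inl (ih.tail
          ⟨deleteIncidenceSet_adj.2 ⟨hadj, ih.ne_of_deleteIncidenceSet hxw, hvw⟩, hu, hv⟩)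
    · exact .inr hex

theorem eq_or_deleteIncidenceSet
    (hw : KempeChain G φ a b x w → ∀ z, G.Adj w z → (φ z = a ∨ φ z = b) →
      KempeChain (G.deleteIncidenceSet w) φ a b x z)
    (h : KempeChain G φ a b x y) : y = w ∨ KempeChain (G.deleteIncidenceSet w) φ a b x y := by
  induction h with
  | refl => exact .inr .refl
  | @tail u v hxu huv ih =>
    obtain ⟨hadj, hu, hv⟩ := huv
    by_cases huw : u = w
    · subst huw
      exact .inr (hw hxu v hadj hv)
    by_cases hvw : v = w
    · exact .inl hvw
    exact .inr ((ih.resolve_left huw).tail ⟨deleteIncidenceSet_adj.2 ⟨hadj, huw, hvw⟩, hu, hv⟩)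

end KempeChain

theorem kempeStep_of_deleteIncidenceSet (hφ : IsLColoring G L φ) (hab : a ≠ b)
    (hx : φ x = a ∨ φ x = b)
    (hL : ∀ y, y ≠ w → kempeSwap (G.deleteIncidenceSet w) φ a b x y ∈ L y)
    (hw : KempeChain G φ a b x w → Equiv.swap a b (φ w) ∈ L w ∧
      ∀ z, G.Adj w z → (φ z = a ∨ φ z = b) → KempeChain (G.deleteIncidenceSet w) φ a b x z) :
    KempeStep G L φ (kempeSwap G φ a b x) ∧
      ∀ y, y ≠ w → kempeSwap G φ a b x y = kempeSwap (G.deleteIncidenceSet w) φ a b x y := by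
  have hagree : ∀ y, y ≠ w →
      kempeSwap G φ a b x y = kempeSwap (G.deleteIncidenceSet w) φ a b x y := by
    intro y hy
    have hchain : KempeChain G φ a b x y ↔ KempeChain (G.deleteIncidenceSet w) φ a b x y :=
      ⟨fun h => (h.eq_or_deleteIncidenceSet fun hxw => (hw hxw).2).resolve_left hy,
        KempeChain.mono (deleteIncidenceSet_le G w)⟩
    simp only [kempeSwap_apply, hchain]
  refine ⟨⟨a, b, x, hab, hx, rfl, fun y => ?_, fun _ _ h => kempeSwap_ne_of_adj hφ.2 h⟩, hagree⟩
  rcases eq_or_ne y w with rfl | hy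
  · rw [kempeSwap_apply]
    split_ifs with hyC
    exacts [(hw hyC).1, hφ.1 y]
  · rw [hagree y hy]
    exact hL y hy

theorem mem_and_unique_of_forall_exists_adj [Finite V]
    (hslack : (G.neighborSet w).ncard < (L w).card) (hw : φ w ∈ L w) {z₀ : V} (hz₀ : G.Adj w z₀)
    (hfull : ∀ c ∈ L w, c ≠ φ w → c ≠ φ z₀ → ∃ z, G.Adj w z ∧ φ z = c) :
    φ z₀ ∈ L w ∧ ∀ z, G.Adj w z → φ z = φ z₀ → z = z₀ := by
  by_contra hcon
  -- otherwise `L w \ {φ w}` is covered by the colors of the `d(w) - 1` neighbours other than `z₀`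
  have hsub : (↑((L w).erase (φ w)) : Set ℕ) ⊆ φ '' (G.neighborSet w \ {z₀}) := by
    intro c hc
    obtain ⟨hcw, hcL⟩ := Finset.mem_erase.1 hc
    by_cases hcz : c = φ z₀
    · subst hcz
      obtain ⟨z, hz, hzc, hne⟩ : ∃ z, G.Adj w z ∧ φ z = φ z₀ ∧ z ≠ z₀ := by
        simpa [hcL] using hcon
      exact ⟨z, ⟨hz, hne⟩, hzc⟩
    · obtain ⟨z, hz, rfl⟩ := hfull c hcL hcw hcz
      exact ⟨z, ⟨hz, fun h => hcz (congrArg φ (Set.mem_singleton_iff.1 h))⟩, rfl⟩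
  have hcard := (Set.ncard_le_ncard hsub (Set.toFinite _)).trans (Set.ncard_image_le (Set.toFinite _))
  rw [Set.ncard_coe_finset, Finset.card_erase_of_mem hw] at hcard
  have := Set.ncard_sdiff_singleton_add_one (show z₀ ∈ G.neighborSet w from hz₀)
  omega

theorem exists_lEquiv_kempeSwap_deleteIncidenceSet [Finite V] (hφ : IsLColoring G L φ)
    (hslack : (G.neighborSet w).ncard < (L w).card) (hab : a ≠ b) (hxw : x ≠ w)
    (hx : φ x = a ∨ φ x = b)
    (hL : ∀ y, y ≠ w → kempeSwap (G.deleteIncidenceSet w) φ a b x y ∈ L y) :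
    ∃ ψ, LEquiv G L φ ψ ∧ ∀ y, y ≠ w → ψ y = kempeSwap (G.deleteIncidenceSet w) φ a b x y := by
  by_cases hw : KempeChain G φ a b x w
  swap
  · obtain ⟨hstep, hagree⟩ := kempeStep_of_deleteIncidenceSet hφ hab hx hL (absurd · hw)
    exact ⟨_, .single hstep, hagree⟩
  have hwab := hw.colors hx
  by_cases hfree : ∃ c ∈ L w, c ≠ a ∧ c ≠ b ∧ ∀ z, G.Adj w z → φ z ≠ c
  · obtain ⟨c, hcL, hca, hcb, hnb⟩ := hfree
    have hstep₁ : KempeStep G L φ (Function.update φ w c) :=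
      kempeStep_update hφ hcL (by omega) hnb
    have hoff : ∀ y, y ≠ w → Function.update φ w c y = φ y := fun y hy =>
      Function.update_of_ne hy c φ
    have hx₁ : Function.update φ w c x = a ∨ Function.update φ w c x = b := hoff x hxw ▸ hx
    have hw₁ : ¬KempeChain G (Function.update φ w c) a b x w := fun h => by
      have := h.colors hx₁
      rw [Function.update_self] at this
      omega
    obtain ⟨hstep₂, hagree⟩ := kempeStep_of_deleteIncidenceSet hstep₁.isLColoring hab hx₁
      (fun y hy => kempeSwap_deleteIncidenceSet_congr hoff hy ▸ hL y hy) (absurd · hw₁)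
    exact ⟨_, .head hstep₁ (.single hstep₂),
      fun y hy => (hagree y hy).trans (kempeSwap_deleteIncidenceSet_congr hoff hy)⟩
  · simp only [not_exists, not_and, not_forall, not_not, exists_prop] at hfree
    obtain ⟨z₀, hz₀, hz₀C, hz₀ab⟩ := (hw.deleteIncidenceSet_or_exists hxw).resolve_left
      fun h => h.ne_of_deleteIncidenceSet hxw rfl
    have hne : φ z₀ ≠ φ w := hφ.2 hz₀.symm
    obtain ⟨hz₀L, huniq⟩ := mem_and_unique_of_forall_exists_adj hslack (hφ.1 w) hz₀
      fun c hc hcw hcz => hfree c hc (by omega) (by omega)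
    have hswap : Equiv.swap a b (φ w) = φ z₀ := by
      rcases hwab with h | h
      · rw [h, Equiv.swap_apply_left]; omega
      · rw [h, Equiv.swap_apply_right]; omega
    obtain ⟨hstep, hagree⟩ := kempeStep_of_deleteIncidenceSet hφ hab hx hL fun _ =>
      ⟨hswap ▸ hz₀L, fun z hz hzab => huniq z hz (by have := hφ.2 hz; omega) ▸ hz₀C⟩
    exact ⟨_, .single hstep, hagree⟩

theorem KempeStep.exists_lift_of_deleteIncidenceSet [Finite V] {σ σ' τ : V → ℕ}
    (hslack : (G.neighborSet w).ncard < (L w).card)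
    (hσ : KempeStep (G.deleteIncidenceSet w) L σ σ') (hτ : IsLColoring G L τ)
    (hoff : ∀ y, y ≠ w → τ y = σ y) : ∃ τ', LEquiv G L τ τ' ∧ ∀ y, y ≠ w → τ' y = σ' y := by
  obtain ⟨a, b, x, hab, hx, rfl, hσ'⟩ := hσ
  rcases eq_or_ne x w with rfl | hxw
  · refine ⟨τ, .refl, fun y hy => ?_⟩
    rw [kempeSwap_apply, if_neg fun h => hy h.eq_of_deleteIncidenceSet, hoff y hy]
  · obtain ⟨τ', hτ', hagree⟩ := exists_lEquiv_kempeSwap_deleteIncidenceSet hτ hslack hab hxw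
      (hoff x hxw ▸ hx) fun y hy => kempeSwap_deleteIncidenceSet_congr hoff hy ▸ hσ'.1 y
    exact ⟨τ', hτ', fun y hy => (hagree y hy).trans (kempeSwap_deleteIncidenceSet_congr hoff hy)⟩

theorem LEquiv.exists_lift_of_deleteIncidenceSet [Finite V] {σ σ' τ : V → ℕ}
    (hslack : (G.neighborSet w).ncard < (L w).card)
    (h : LEquiv (G.deleteIncidenceSet w) L σ σ') (hτ : IsLColoring G L τ)
    (hoff : ∀ y, y ≠ w → τ y = σ y) : ∃ τ', LEquiv G L τ τ' ∧ ∀ y, y ≠ w → τ' y = σ' y := by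
  induction h with
  | refl => exact ⟨τ, .refl, hoff⟩
  | tail _ hstep ih =>
    obtain ⟨τ₁, h₁, hoff₁⟩ := ih
    obtain ⟨τ₂, h₂, hoff₂⟩ := hstep.exists_lift_of_deleteIncidenceSet hslack (h₁.isLColoring hτ) hoff₁
    exact ⟨τ₂, h₁.trans h₂, hoff₂⟩

theorem LSwappable.of_deleteIncidenceSet [Finite V]
    (hslack : (G.neighborSet w).ncard < (L w).card) (h : LSwappable (G.deleteIncidenceSet w) L) :
    LSwappable G L := by
  intro φ ψ hφ hψ
  have hle := deleteIncidenceSet_le G w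
  obtain ⟨τ, hφτ, hτψ⟩ :=
    (h φ ψ (hφ.mono hle) (hψ.mono hle)).exists_lift_of_deleteIncidenceSet hslack hφ fun _ _ => rfl
  exact hφτ.trans (lEquiv_of_forall_ne_eq (hφτ.isLColoring hφ) hψ hτψ)

namespace SimpleGraph

theorem deleteIncidenceSet_lt {z : V} (hwz : G.Adj w z) : G.deleteIncidenceSet w < G :=
  (deleteIncidenceSet_le G w).lt_of_not_ge fun h => (deleteIncidenceSet_adj.1 (h hwz)).2.1 rfl

theorem ncard_neighborSet_deleteIncidenceSet_le [Finite V] (G : SimpleGraph V) (w v : V) :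
    ((G.deleteIncidenceSet w).neighborSet v).ncard ≤ (G.neighborSet v).ncard :=
  Set.ncard_le_ncard (fun _ h => deleteIncidenceSet_le G w h)

theorem ncard_neighborSet_deleteIncidenceSet_lt [Finite V] (hwv : G.Adj w v) :
    ((G.deleteIncidenceSet w).neighborSet v).ncard < (G.neighborSet v).ncard :=
  Set.ncard_lt_ncard ((Set.ssubset_iff_of_subset fun _ h => deleteIncidenceSet_le G w h).2
    ⟨w, hwv.symm, fun h => (deleteIncidenceSet_adj.1 h).2.2 rfl⟩)

theorem Reachable.eq_of_forall_not_adj (h : G.Reachable v w) (hw : ∀ z, ¬G.Adj w z) : v = w := by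
  obtain ⟨p⟩ := h.symm
  cases p with
  | nil => rfl
  | cons hadj _ => exact (hw _ hadj).elim

theorem Walk.reachable_deleteIncidenceSet_or_exists {t : V} (p : G.Walk v t) (hv : v ≠ w) :
    (G.deleteIncidenceSet w).Reachable v t ∨
      ∃ u, G.Adj w u ∧ (G.deleteIncidenceSet w).Reachable v u := by
  induction p with
  | nil => exact .inl .rfl
  | @cons v v' t hadj p ih =>
    by_cases hv' : v' = w
    · subst hv'
      exact .inr ⟨v, hadj.symm, .rfl⟩
    · have e : (G.deleteIncidenceSet w).Reachable v v' :=
        (deleteIncidenceSet_adj.2 ⟨hadj, hv, hv'⟩).reachable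
      exact (ih hv').imp e.trans fun ⟨u, hu, hr⟩ => ⟨u, hu, e.trans hr⟩

end SimpleGraph

theorem exists_reachable_slack_deleteIncidenceSet [Finite V]
    (hall : ∀ v, (G.neighborSet v).ncard ≤ (L v).card)
    (hslack : ∀ v, ∃ u, G.Reachable v u ∧ (G.neighborSet u).ncard < (L u).card)
    (hw : (G.neighborSet w).ncard < (L w).card) (v : V) :
    ∃ u, (G.deleteIncidenceSet w).Reachable v u ∧
      ((G.deleteIncidenceSet w).neighborSet u).ncard < (L u).card := by
  rcases eq_or_ne v w with rfl | hvw
  · refine ⟨v, .rfl, ?_⟩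
    have : (G.deleteIncidenceSet v).neighborSet v = ∅ :=
      Set.eq_empty_of_forall_notMem fun _ h => (deleteIncidenceSet_adj.1 h).2.1 rfl
    rw [this, Set.ncard_empty]
    omega
  obtain ⟨u, ⟨p⟩, hu⟩ := hslack v
  rcases p.reachable_deleteIncidenceSet_or_exists hvw with hr | ⟨u', hu', hr⟩
  · exact ⟨u, hr, (ncard_neighborSet_deleteIncidenceSet_le G w u).trans_lt hu⟩
  · exact ⟨u', hr, (ncard_neighborSet_deleteIncidenceSet_lt hu').trans_le (hall u')⟩

theorem lSwappable_of_forall_exists_reachable [Finite V] (G : SimpleGraph V)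
    (hall : ∀ v, (G.neighborSet v).ncard ≤ (L v).card)
    (hslack : ∀ v, ∃ u, G.Reachable v u ∧ (G.neighborSet u).ncard < (L u).card) :
    LSwappable G L := by
  induction G using WellFoundedLT.induction with
  | _ G ih =>
  by_cases hw : ∃ w z, G.Adj w z ∧ (G.neighborSet w).ncard < (L w).card
  · obtain ⟨w, z, hwz, hw⟩ := hw
    exact (ih _ (deleteIncidenceSet_lt hwz)
      (fun v => (ncard_neighborSet_deleteIncidenceSet_le G w v).trans (hall v))
      (exists_reachable_slack_deleteIncidenceSet hall hslack hw)).of_deleteIncidenceSet hw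
  · refine lSwappable_of_forall_not_adj fun v z hvz => hw ?_
    obtain ⟨u, hvu, hu⟩ := hslack v
    by_cases hu' : ∃ z', G.Adj u z'
    · obtain ⟨z', huz'⟩ := hu'
      exact ⟨u, z', huz', hu⟩
    · obtain rfl := hvu.eq_of_forall_not_adj (not_exists.1 hu')
      exact ⟨v, z, hvz, hu⟩

end

/-- **Corollary 5, second statement.** Let `G` be a connected graph and `L` a list
assignment for `G`.  If `|L(v)| ≥ d(v)` for all `v ∈ V(G)` and there exists some vertex `w`
with `|L(w)| > d(w)`, then `G` is `L`-swappable. -/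
theorem corollary5b {V : Type*} [Fintype V] (G : SimpleGraph V) (hconn : G.Connected)
    (L : V → Finset ℕ)
    (hall : ∀ v, (G.neighborSet v).ncard ≤ (L v).card)
    (hex : ∃ w, (G.neighborSet w).ncard < (L w).card) :
    LSwappable G L := by
  obtain ⟨w, hw⟩ := hex
  exact lSwappable_of_forall_exists_reachable G hall fun v => ⟨w, hconn.preconnected v w, hw⟩
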